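/- arXiv:2303.07148 — 2 statements merged into one kernel-verified Lean document; each statement's English description precedes it below -/
import Mathlib

section
/- Let Θ be a space of input histories over (E, I) with output sets O, and let f ∈ CausFun(Θ,O). For every k ∈ Ext(Θ), the partial functions over (E,O) given by f(h) with domain tips_Θ(h), ranging over all h ∈ Θ with h ≤ k, are pairwise compatible, and their join is the partial function Ext(f)(k) with domain dom(k); that is, Ext(f)(k) = ⋁_{h ∈ ↓k ∩ Θ} f(h). -/
namespace Caus

/-- Partial functions over events `E` with value family `V`:
each event is assigned an optional value. -/
abbrev PF (E : Type) (V : E → Type) : Type := ∀ ω : E, Option (V ω)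

variable {E : Type} {I O : E → Type}

/-- The total function `k` viewed as a partial function with full domain. -/
def toPF (k : ∀ ω : E, I ω) : PF E I := fun ω => some (k ω)

/-- Domain of a partial function. -/
def dom (h : PF E I) : Set E := {ω | (h ω).isSome}

/-- The order on partial functions: `h' ≤ h` iff `dom h' ⊆ dom h` and they agree on `dom h'`. -/
def le (h' h : PF E I) : Prop := ∀ ω : E, (h' ω).isSome → h' ω = h ω

/-- Compatibility: agreeing on the intersection of the domains. -/
def Compat (h h' : PF E I) : Prop :=
  ∀ ω : E, (h ω).isSome → (h' ω).isSome → h ω = h' ω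

/-- Join of two partial functions (union, when they are compatible). -/
def join (h h' : PF E I) : PF E I := fun ω => (h ω).orElse fun _ => h' ω

/-- `k` is the join (union) of the set `S` of partial functions. -/
def IsJoinOf (k : PF E I) (S : Set (PF E I)) : Prop :=
  ∀ (ω : E) (x : I ω), k ω = some x ↔ ∃ h ∈ S, h ω = some x

/-- `Ext Θ`: joins of nonempty pairwise-compatible subsets of `Θ`. -/
def Ext (Θ : Set (PF E I)) : Set (PF E I) :=
  {k | ∃ S ⊆ Θ, S.Nonempty ∧ S.Pairwise Compat ∧ IsJoinOf k S}

/-- A space of input histories: every `h ∈ Θ` is ∨-prime in `Ext Θ`. -/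
def IsSpace (Θ : Set (PF E I)) : Prop :=
  ∀ h ∈ Θ, ∀ k ∈ Ext Θ, ∀ k' ∈ Ext Θ, Compat k k' →
    le h (join k k') → le h k ∨ le h k'

/-- Tip events of `h` in `Θ`. -/
def tips (Θ : Set (PF E I)) (h : PF E I) : Set E :=
  {ω | ω ∈ dom h ∧ ∀ h' ∈ Θ, le h' h → h' ≠ h → ω ∉ dom h'}

/-- Extended functions: the output partial function has the same domain as the input. -/
def IsExtFun (Θ : Set (PF E I)) (F : PF E I → PF E O) : Prop :=
  ∀ k ∈ Ext Θ, dom (F k) = dom k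

/-- The consistency condition for extended functions. -/
def Consistent (Θ : Set (PF E I)) (F : PF E I → PF E O) : Prop :=
  ∀ k ∈ Ext Θ, ∀ k' ∈ Ext Θ, le k' k → le (F k') (F k)

/-- `h` and `h'` are constrained at `ω`: both have tip `ω` and every consistent
extended function with binary outputs takes the same value at `ω` on them. -/
def Constr (Θ : Set (PF E I)) (ω : E) (h h' : PF E I) : Prop :=
  h ∈ Θ ∧ h' ∈ Θ ∧ ω ∈ tips Θ h ∧ ω ∈ tips Θ h' ∧
  ∀ F : PF E I → PF E (fun _ => Bool),
    IsExtFun Θ F → Consistent Θ F → F h ω = F h' ω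

/-- Causal function conditions: `f h` is an assignment of outputs to the tips of `h`,
with equal outputs on histories constrained at an event. -/
def IsCausFun (Θ : Set (PF E I)) (f : PF E I → PF E O) : Prop :=
  (∀ h ∈ Θ, dom (f h) = tips Θ h) ∧
  ∀ (ω : E) (h h' : PF E I), Constr Θ ω h h' → f h ω = f h' ω

/-- Causal functions for `Θ` with outputs `W` (normalized to `none` outside `Θ`). -/
def CausFunSet (Θ : Set (PF E I)) (W : E → Type) : Set (PF E I → PF E W) :=
  {f | IsCausFun Θ f ∧ ∀ h ∉ Θ, ∀ ω : E, f h ω = none}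

open Classical in
/-- The extended causal function `Ext f` of a causal function `f`. -/
noncomputable def extCF (Θ : Set (PF E I)) (f : PF E I → PF E O) : PF E I → PF E O :=
  fun k ω =>
    if hh : ∃ h, h ∈ Θ ∧ le h k ∧ ω ∈ tips Θ h then f hh.choose ω else none

open Classical in
/-- `Prime F̂`: the causal function underlying a consistent extended function. -/
noncomputable def primeCF (Θ : Set (PF E I)) (F : PF E I → PF E O) : PF E I → PF E O :=
  fun h ω => if h ∈ Θ ∧ ω ∈ tips Θ h then F h ω else none

open Classical in
/-- Restriction of a causal function to a lowerset (normalized outside it). -/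
noncomputable def restrictCF (lam : Set (PF E I)) (f : PF E I → PF E O) :
    PF E I → PF E O :=
  fun h => if h ∈ lam then f h else fun _ => none

/-- The free-choice condition. -/
def FreeChoice (Θ : Set (PF E I)) : Prop := ∀ k : ∀ ω : E, I ω, toPF k ∈ Ext Θ

/-- Tightness. -/
def Tight (Θ : Set (PF E I)) : Prop :=
  ∀ k ∈ Ext Θ, ∀ ω ∈ dom k, ∃! h, h ∈ Θ ∧ le h k ∧ ω ∈ tips Θ h

/-- Maximal extended input histories. -/
def maxExt (Θ : Set (PF E I)) : Set (PF E I) :=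
  {k | k ∈ Ext Θ ∧ ∀ k' ∈ Ext Θ, le k k' → k' = k}

/-- Lowersets (downward-closed subsets) of a space `Θ`. -/
def IsLowersetOf (Θ lam : Set (PF E I)) : Prop :=
  lam ⊆ Θ ∧ ∀ h ∈ lam, ∀ h' ∈ Θ, le h' h → h' ∈ lam

lemma le_trans {a b c : PF E I} (hab : le a b) (hbc : le b c) : le a c := by
  intro ω hω
  rw [hab ω hω]
  exact hbc ω (hab ω hω ▸ hω)

lemma dom_subset_of_le {h' h : PF E I} (hle : le h' h) : dom h' ⊆ dom h :=
  fun ω hω => (hle ω hω ▸ hω : (h ω).isSome)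

lemma dom_ssubset_of_le_of_ne {h' h : PF E I} (hle : le h' h) (hne : h' ≠ h) :
    dom h' ⊂ dom h := by
  refine (dom_subset_of_le hle).ssubset_of_ne fun hdom => hne (funext fun ω => ?_)
  by_cases hω : (h' ω).isSome
  · exact hle ω hω
  · have hω' : ¬ (h ω).isSome := fun hs => hω (hdom ▸ hs : ω ∈ dom h')
    rw [Option.not_isSome_iff_eq_none.mp hω, Option.not_isSome_iff_eq_none.mp hω']

lemma tips_subset_dom (Θ : Set (PF E I)) (h : PF E I) : tips Θ h ⊆ dom h :=
  fun _ hω => hω.1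

lemma le_of_isJoinOf {k : PF E I} {S : Set (PF E I)} (hk : IsJoinOf k S)
    {h : PF E I} (hS : h ∈ S) : le h k := by
  intro ω hω
  obtain ⟨x, hx⟩ := Option.isSome_iff_exists.mp hω
  rw [hx, (hk ω x).mpr ⟨h, hS, hx⟩]

lemma mem_Ext_of_mem {Θ : Set (PF E I)} {h : PF E I} (hh : h ∈ Θ) : h ∈ Ext Θ :=
  ⟨{h}, Set.singleton_subset_iff.mpr hh, Set.singleton_nonempty h,
    Set.pairwise_singleton _ _, fun ω x => by simp⟩

/-- A history below `k` whose domain contains `ω` and is smallest possible has `ω` as a tip;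
finiteness of `E` guarantees that such a minimal history exists. -/
lemma exists_le_mem_tips [Finite E] {Θ : Set (PF E I)} {k : PF E I} (hk : k ∈ Ext Θ)
    {ω : E} (hω : ω ∈ dom k) : ∃ h ∈ Θ, le h k ∧ ω ∈ tips Θ h := by
  obtain ⟨S, hSΘ, -, -, hkS⟩ := hk
  obtain ⟨x, hx⟩ := Option.isSome_iff_exists.mp hω
  obtain ⟨h₀, hh₀S, hh₀⟩ := (hkS ω x).mp hx
  let T : Set (PF E I) := {h | h ∈ Θ ∧ le h k ∧ ω ∈ dom h}
  have hh₀T : h₀ ∈ T :=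
    ⟨hSΘ hh₀S, le_of_isJoinOf hkS hh₀S, Option.isSome_iff_exists.mpr ⟨x, hh₀⟩⟩
  obtain ⟨h, ⟨hhΘ, hhk, hωh⟩, hmin⟩ :=
    (measure fun h : PF E I => (dom h).ncard).wf.has_min T ⟨h₀, hh₀T⟩
  refine ⟨h, hhΘ, hhk, hωh, fun h' hh'Θ hle hne hωh' => hmin h' ⟨hh'Θ, le_trans hle hhk, hωh'⟩ ?_⟩
  exact Set.ncard_lt_ncard (dom_ssubset_of_le_of_ne hle hne)

/-- Any consistent extended function is constant at `ω` along `h ≤ k`, because `ω` lies in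
`dom (F h)`; so it takes the same value at `ω` on two histories below a common `k`. -/
lemma constr_of_le {Θ : Set (PF E I)} {k h h' : PF E I} {ω : E} (hk : k ∈ Ext Θ)
    (hh : h ∈ Θ) (hh' : h' ∈ Θ) (hhk : le h k) (hh'k : le h' k)
    (hω : ω ∈ tips Θ h) (hω' : ω ∈ tips Θ h') : Constr Θ ω h h' := by
  refine ⟨hh, hh', hω, hω', fun F hF hC => ?_⟩
  have hFk : ∀ g ∈ Θ, le g k → ω ∈ tips Θ g → F g ω = F k ω := fun g hg hgk hωg =>
    hC k hk g (mem_Ext_of_mem hg) hgk ω (hF g (mem_Ext_of_mem hg) ▸ hωg.1 : ω ∈ dom (F g))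
  rw [hFk h hh hhk hω, hFk h' hh' hh'k hω']

section CausFun

variable {Θ : Set (PF E I)} {f : PF E I → PF E O}

lemma IsCausFun.apply_eq_of_le {k h h' : PF E I} {ω : E} (hf : IsCausFun Θ f)
    (hk : k ∈ Ext Θ) (hh : h ∈ Θ) (hh' : h' ∈ Θ) (hhk : le h k) (hh'k : le h' k)
    (hω : ω ∈ tips Θ h) (hω' : ω ∈ tips Θ h') : f h ω = f h' ω :=
  hf.2 ω h h' (constr_of_le hk hh hh' hhk hh'k hω hω')

lemma IsCausFun.mem_tips_of_isSome {h : PF E I} {ω : E} (hf : IsCausFun Θ f) (hh : h ∈ Θ)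
    (hω : (f h ω).isSome) : ω ∈ tips Θ h :=
  hf.1 h hh ▸ hω

lemma IsCausFun.compat_of_le {k h h' : PF E I} (hf : IsCausFun Θ f) (hk : k ∈ Ext Θ)
    (hh : h ∈ Θ) (hh' : h' ∈ Θ) (hhk : le h k) (hh'k : le h' k) : Compat (f h) (f h') :=
  fun _ hω hω' => hf.apply_eq_of_le hk hh hh' hhk hh'k
    (hf.mem_tips_of_isSome hh hω) (hf.mem_tips_of_isSome hh' hω')

lemma IsCausFun.extCF_apply {k h : PF E I} {ω : E} (hf : IsCausFun Θ f) (hk : k ∈ Ext Θ)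
    (hh : h ∈ Θ) (hhk : le h k) (hω : ω ∈ tips Θ h) : extCF Θ f k ω = f h ω := by
  have hex : ∃ h, h ∈ Θ ∧ le h k ∧ ω ∈ tips Θ h := ⟨h, hh, hhk, hω⟩
  obtain ⟨hcΘ, hck, hωc⟩ := hex.choose_spec
  rw [extCF, dif_pos hex]
  exact hf.apply_eq_of_le hk hcΘ hh hck hhk hωc hω

lemma exists_of_extCF_isSome {k : PF E I} {ω : E} (hω : (extCF Θ f k ω).isSome) :
    ∃ h ∈ Θ, le h k ∧ ω ∈ tips Θ h := by
  by_contra hex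
  simp [extCF, dif_neg hex] at hω

lemma IsCausFun.dom_extCF [Finite E] {k : PF E I} (hf : IsCausFun Θ f) (hk : k ∈ Ext Θ) :
    dom (extCF Θ f k) = dom k := by
  ext ω
  constructor
  · intro hω
    obtain ⟨h, -, hhk, hωh⟩ := exists_of_extCF_isSome hω
    exact dom_subset_of_le hhk hωh.1
  · intro hω
    obtain ⟨h, hh, hhk, hωh⟩ := exists_le_mem_tips hk hω
    show (extCF Θ f k ω).isSome
    rw [hf.extCF_apply hk hh hhk hωh]
    exact (hf.1 h hh ▸ hωh : ω ∈ dom (f h))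

lemma IsCausFun.isJoinOf_extCF {k : PF E I} (hf : IsCausFun Θ f) (hk : k ∈ Ext Θ) :
    IsJoinOf (extCF Θ f k) {g : PF E O | ∃ h ∈ Θ, le h k ∧ g = f h} := by
  intro ω x
  constructor
  · intro hx
    obtain ⟨h, hh, hhk, hωh⟩ := exists_of_extCF_isSome (Option.isSome_iff_exists.mpr ⟨x, hx⟩)
    exact ⟨f h, ⟨h, hh, hhk, rfl⟩, hf.extCF_apply hk hh hhk hωh ▸ hx⟩
  · rintro ⟨_, ⟨h, hh, hhk, rfl⟩, hx⟩
    have hωh := hf.mem_tips_of_isSome hh (Option.isSome_iff_exists.mpr ⟨x, hx⟩)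
    rw [hf.extCF_apply hk hh hhk hωh, hx]

end CausFun

theorem stmt8_general {E : Type} [Fintype E] {I O : E → Type}
    (Θ : Set (PF E I)) :
    ∀ f ∈ CausFunSet Θ O, ∀ k ∈ Ext Θ,
      (∀ h ∈ Θ, le h k → ∀ h' ∈ Θ, le h' k → Compat (f h) (f h')) ∧
      dom (extCF Θ f k) = dom k ∧
      IsJoinOf (extCF Θ f k) {g : PF E O | ∃ h ∈ Θ, le h k ∧ g = f h} := by
  rintro f ⟨hf, -⟩ k hk
  exact ⟨fun h hh hhk h' hh' hh'k => hf.compat_of_le hk hh hh' hhk hh'k,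
    hf.dom_extCF hk, hf.isJoinOf_extCF hk⟩

/-- for a causal function `f` and extended input history `k`, the
partial output functions `f h` for `h ∈ ↓k ∩ Θ` are pairwise compatible and their join
is `Ext f (k)`, whose domain is `dom k`. -/
theorem stmt8 {E : Type} [Fintype E] {I O : E → Type}
    [∀ ω, Nonempty (I ω)] [∀ ω, Nonempty (O ω)]
    (Θ : Set (PF E I)) (hS : IsSpace Θ) :
    ∀ f ∈ CausFunSet Θ O, ∀ k ∈ Ext Θ,
      (∀ h ∈ Θ, le h k → ∀ h' ∈ Θ, le h' k → Compat (f h) (f h')) ∧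
      dom (extCF Θ f k) = dom k ∧
      IsJoinOf (extCF Θ f k) {g : PF E O | ∃ h ∈ Θ, le h k ∧ g = f h} :=
  stmt8_general Θ

end Caus
end

section
/- Let Θ be a space of input histories over (E, I) with outputs O, and Θ' a space of input histories over (E', I') with outputs O', where E ∩ E' = ∅, and let Θ ⤳ Θ' := Θ ∪ {k ∨ h' : k maximal in Ext(Θ), h' ∈ Θ'} be their sequential composition. Then the map sending a pair (f, (f'_k)_{k maximal in Ext(Θ)}) ∈ CausFun(Θ,O) × CausFun(Θ',O')^{max Ext(Θ)} to the function on Θ ⤳ Θ' defined by h ↦ f(h) for h ∈ Θ and k ∨ h' ↦ f'_k(h') for k maximal in Ext(Θ) and h' ∈ Θ' is a well-defined bijection onto CausFun(Θ ⤳ Θ', O ⊔ O'); in particular CausFun(Θ ⤳ Θ', O ⊔ O') ≅ CausFun(Θ,O) × CausFun(Θ',O')^{max Ext(Θ)}. -/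
namespace Caus

variable {E : Type} {I O : E → Type}

/-- Sequential composition `Θ ⤳ Θ'`. -/
def seqComp (Θ Θ' : Set (PF E I)) : Set (PF E I) :=
  Θ ∪ {g | ∃ k ∈ maxExt Θ, ∃ h' ∈ Θ', g = join k h'}

/-- Families of causal functions on `Θ'` indexed by maximal extended input histories
of `Θ` (normalized outside the index set). -/
def seqFamSet (Θ Θ' : Set (PF E I)) (W : E → Type) :
    Set (PF E I → (PF E I → PF E W)) :=
  {F | (∀ k ∈ maxExt Θ, F k ∈ CausFunSet Θ' W) ∧
       ∀ k ∉ maxExt Θ, F k = fun _ _ => none}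

open Classical in
/-- Restriction of a partial function to a set of events. -/
noncomputable def restrictTo (A : Set E) {V : E → Type} (h : PF E V) : PF E V :=
  fun ω => if ω ∈ A then h ω else none

open Classical in
/-- Gluing of a pair `(f, (f'_k)_k)` to a function on `Θ ⤳ Θ'`. -/
noncomputable def seqGlue (Θ Θ' : Set (PF E I)) (E₁ E₂ : Set E)
    (p : (PF E I → PF E O) × (PF E I → (PF E I → PF E O))) : PF E I → PF E O :=
  fun g =>
    if g ∈ Θ then p.1 g
    else if g ∈ seqComp Θ Θ' then p.2 (restrictTo E₁ g) (restrictTo E₂ g)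
    else fun _ => none

/-! Since `Θ` and `Θ'` live on disjoint events, a history of `Θ ⤳ Θ'` outside `Θ` splits
uniquely as `k ∨ h'` with `k` maximal in `Ext Θ` and `h' ∈ Θ'`. Tips decompose accordingly:
on `Θ` they are the tips in `Θ`, on `k ∨ h'` those of `h'` in `Θ'`. So do the constraint
relations: restricting to `E₁` or `E₂` turns consistent Boolean extended functions of `Θ` or `Θ'`
into ones of `Θ ⤳ Θ'` and back, and constrained joins `k ∨ h'`, `k₂ ∨ h₂` have `k = k₂`, since
the `E₁`-part of an extended history is locally constant at its `E₂`-events. A causal function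
on `Θ ⤳ Θ'` is therefore a causal function on `Θ` together with one on `Θ'` for each `k`, and
reading off these pieces inverts `seqGlue`. -/

section PartialFunctions

variable {h h' k m : PF E I} {ω : E}

theorem mem_dom_iff : ω ∈ dom h ↔ ∃ a, h ω = some a := Option.isSome_iff_exists

theorem mem_dom_of_eq_some {a : I ω} (ha : h ω = some a) : ω ∈ dom h := by
  simp [dom, ha]

theorem eq_none_of_dom_subset {A : Set E} (hd : dom h ⊆ A) (hω : ω ∉ A) : h ω = none := by
  simpa [dom] using mt (@hd ω) hω

theorem eq_none_of_dom_eq_empty (hd : dom h = ∅) : h = fun _ => none :=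
  funext fun _ => eq_none_of_dom_subset hd.subset (Set.notMem_empty _)

theorem le.eq_some (hle : le h' h) {a : I ω} (ha : h' ω = some a) : h ω = some a := by
  rw [← hle ω (by simp [ha]), ha]

theorem le.dom_subset (hle : le h' h) : dom h' ⊆ dom h := fun _ hω =>
  let ⟨_, ha⟩ := mem_dom_iff.mp hω
  mem_dom_of_eq_some (hle.eq_some ha)

theorem le.trans {h'' : PF E I} (h₁ : le h'' h') (h₂ : le h' h) : le h'' h := fun _ hω =>
  let ⟨_, ha⟩ := mem_dom_iff.mp hω
  ha.trans (h₂.eq_some (h₁.eq_some ha)).symm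

theorem le.antisymm (h₁ : le h' h) (h₂ : le h h') : h' = h := by
  funext ω
  cases ha : h' ω with
  | some a => exact (h₁.eq_some ha).symm
  | none =>
    cases hb : h ω with
    | some b => rw [← ha, h₂.eq_some hb]
    | none => rfl

theorem Compat.symm (hc : Compat h h') : Compat h' h := fun ω h₁ h₂ => (hc ω h₂ h₁).symm

instance : Std.Refl (@Compat E I) := ⟨fun _ _ _ _ => rfl⟩

instance : Std.Symm (@Compat E I) := ⟨fun _ _ => Compat.symm⟩

theorem Compat.of_le {k' : PF E I} (hc : Compat k k') (hh : le h k) (hh' : le h' k') :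
    Compat h h' := fun ω h₁ h₂ => by
  obtain ⟨a, ha⟩ := mem_dom_iff.mp h₁
  obtain ⟨b, hb⟩ := mem_dom_iff.mp h₂
  have := hc ω (mem_dom_of_eq_some (hh.eq_some ha)) (mem_dom_of_eq_some (hh'.eq_some hb))
  rwa [hh.eq_some ha, hh'.eq_some hb, ← ha, ← hb] at this

theorem join_apply_of_eq_some {a : I ω} (hk : k ω = some a) : join k h ω = some a := by
  simp [join, hk]

theorem join_apply_of_eq_none (hk : k ω = none) : join k h ω = h ω := by
  simp [join, hk]

theorem le_join_left : le k (join k h) := fun _ hω =>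
  let ⟨_, ha⟩ := mem_dom_iff.mp hω
  ha.trans (join_apply_of_eq_some ha).symm

theorem le_join_right (hc : Compat k h) : le h (join k h) := fun ω hω => by
  cases hk : k ω with
  | some a => rw [join_apply_of_eq_some hk, ← hk, hc ω (by simp [hk]) hω]
  | none => rw [join_apply_of_eq_none hk]

theorem join_le_join_right (hle : le h' h) : le (join k h') (join k h) := fun ω hω => by
  cases hk : k ω with
  | some a => rw [join_apply_of_eq_some hk, join_apply_of_eq_some hk]
  | none =>
    rw [join_apply_of_eq_none hk] at hω ⊢
    rw [join_apply_of_eq_none hk]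
    exact hle ω hω

theorem Compat.join_left (hc : Compat h h') : Compat (join k h) (join k h') := fun ω h₁ h₂ => by
  cases hk : k ω with
  | some a => rw [join_apply_of_eq_some hk, join_apply_of_eq_some hk]
  | none =>
    rw [join_apply_of_eq_none hk] at h₁ h₂ ⊢
    rw [join_apply_of_eq_none hk]
    exact hc ω h₁ h₂

theorem mem_dom_join_right (hω : ω ∈ dom h) : ω ∈ dom (join k h) := by
  cases hk : k ω with
  | some a => exact mem_dom_of_eq_some (join_apply_of_eq_some hk)
  | none => simpa [dom, join_apply_of_eq_none hk] using hω

end PartialFunctions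

section Joins

variable {Θ : Set (PF E I)} {h k m : PF E I} {S : Set (PF E I)} {ω : E}

theorem IsJoinOf.le_of_mem (hm : IsJoinOf m S) (hh : h ∈ S) : le h m := fun ω hω =>
  let ⟨a, ha⟩ := mem_dom_iff.mp hω
  ha.trans ((hm ω a).mpr ⟨h, hh, ha⟩).symm

theorem IsJoinOf.le_of_forall_le (hm : IsJoinOf m S) (hS : ∀ h ∈ S, le h k) : le m k :=
  fun ω hω => by
    obtain ⟨a, ha⟩ := mem_dom_iff.mp hω
    obtain ⟨h, hh, hha⟩ := (hm ω a).mp ha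
    rw [ha, (hS h hh).eq_some hha]

theorem IsJoinOf.join_left (hm : IsJoinOf m S) (hS : S.Nonempty) :
    IsJoinOf (join k m) (join k '' S) := fun ω x => by
  cases hk : k ω with
  | some a =>
    obtain ⟨h, hh⟩ := hS
    simp only [join_apply_of_eq_some hk, Set.exists_mem_image]
    exact ⟨fun hx => ⟨h, hh, hx⟩, fun ⟨_, _, hx⟩ => hx⟩
  | none => simp only [join_apply_of_eq_none hk, Set.exists_mem_image, hm ω x]

theorem mem_ext_of_mem (hh : h ∈ Θ) : h ∈ Ext Θ :=
  ⟨{h}, by simpa using hh, Set.singleton_nonempty h, Set.pairwise_singleton h Compat,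
    fun _ _ => by simp⟩

theorem ext_mono {Θ' : Set (PF E I)} (hsub : Θ ⊆ Θ') : Ext Θ ⊆ Ext Θ' :=
  fun _ ⟨S, hS, hne, hc, hj⟩ => ⟨S, hS.trans hsub, hne, hc, hj⟩

theorem exists_le_of_mem_dom_of_mem_ext (hk : k ∈ Ext Θ) (hω : ω ∈ dom k) :
    ∃ h ∈ Θ, le h k ∧ ω ∈ dom h := by
  obtain ⟨S, hSΘ, -, -, hj⟩ := hk
  obtain ⟨a, ha⟩ := mem_dom_iff.mp hω
  obtain ⟨h, hh, hha⟩ := (hj ω a).mp ha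
  exact ⟨h, hSΘ hh, hj.le_of_mem hh, mem_dom_of_eq_some hha⟩

theorem dom_subset_of_mem_ext {A : Set E} (hd : ∀ h ∈ Θ, dom h ⊆ A) (hk : k ∈ Ext Θ) :
    dom k ⊆ A := fun _ hω =>
  let ⟨h, hh, _, hωh⟩ := exists_le_of_mem_dom_of_mem_ext hk hω
  hd h hh hωh

theorem join_mem_ext {k' : PF E I} (hk : k ∈ Ext Θ) (hk' : k' ∈ Ext Θ) (hc : Compat k k') :
    join k k' ∈ Ext Θ := by
  obtain ⟨S, hSΘ, hSne, hSc, hj⟩ := hk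
  obtain ⟨S', hS'Θ, -, hS'c, hj'⟩ := hk'
  refine ⟨S ∪ S', Set.union_subset hSΘ hS'Θ, hSne.mono Set.subset_union_left, ?_, ?_⟩
  · rw [Set.pairwise_union_of_symm]
    exact ⟨hSc, hS'c, fun a ha b hb _ => hc.of_le (hj.le_of_mem ha) (hj'.le_of_mem hb)⟩
  · intro ω x
    simp only [Set.mem_union, or_and_right, exists_or, ← hj ω x, ← hj' ω x]
    cases hkω : k ω with
    | some a =>
      rw [join_apply_of_eq_some hkω]
      refine ⟨Or.inl, fun hx => hx.elim id fun hx' => ?_⟩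
      rw [← hx', ← hkω, hc ω (by simp [hkω]) (by simp [hx'])]
    | none => simp [join_apply_of_eq_none hkω]

theorem le_of_mem_maxExt (hk : k ∈ maxExt Θ) (hk' : m ∈ Ext Θ) (hc : Compat m k) : le m k := by
  have hjoin : join k m = k := hk.2 _ (join_mem_ext hk.1 hk' hc.symm) le_join_left
  exact hjoin ▸ le_join_right hc.symm

end Joins

section Restriction

variable {A B : Set E} {V : E → Type} {h k : PF E V} {ω : E}

theorem restrictTo_apply_of_mem (hω : ω ∈ A) : restrictTo A h ω = h ω := if_pos hω

theorem restrictTo_apply_of_notMem (hω : ω ∉ A) : restrictTo A h ω = none := if_neg hω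

theorem mem_dom_restrictTo : ω ∈ dom (restrictTo A h) ↔ ω ∈ A ∧ ω ∈ dom h := by
  by_cases hA : ω ∈ A <;> simp [dom, restrictTo, hA]

theorem restrictTo_eq_self (hd : dom h ⊆ A) : restrictTo A h = h := by
  funext ω
  by_cases hA : ω ∈ A
  · exact restrictTo_apply_of_mem hA
  · rw [restrictTo_apply_of_notMem hA, eq_none_of_dom_subset hd hA]

theorem restrictTo_le_self : le (restrictTo A h) h := fun ω hω => by
  rw [restrictTo_apply_of_mem (mem_dom_restrictTo.mp hω).1]

theorem restrictTo_le_restrictTo (hle : le h k) : le (restrictTo A h) (restrictTo A k) :=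
  fun ω hω => by
    have hA := (mem_dom_restrictTo.mp hω).1
    rw [restrictTo_apply_of_mem hA] at hω ⊢
    rw [restrictTo_apply_of_mem hA]
    exact hle ω hω

theorem restrictTo_join_left (hAB : Disjoint A B) (hk : dom k ⊆ A) (hh : dom h ⊆ B) :
    restrictTo A (join k h) = k := by
  funext ω
  by_cases hA : ω ∈ A
  · rw [restrictTo_apply_of_mem hA]
    cases hkω : k ω with
    | some a => exact join_apply_of_eq_some hkω
    | none => rw [join_apply_of_eq_none hkω, eq_none_of_dom_subset hh (hAB.notMem_of_mem_left hA)]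
  · rw [restrictTo_apply_of_notMem hA, eq_none_of_dom_subset hk hA]

theorem restrictTo_join_right (hAB : Disjoint A B) (hk : dom k ⊆ A) (hh : dom h ⊆ B) :
    restrictTo B (join k h) = h := by
  funext ω
  by_cases hB : ω ∈ B
  · rw [restrictTo_apply_of_mem hB,
      join_apply_of_eq_none (eq_none_of_dom_subset hk (hAB.notMem_of_mem_right hB))]
  · rw [restrictTo_apply_of_notMem hB, eq_none_of_dom_subset hh hB]

theorem IsJoinOf.restrictTo {m : PF E I} {S T : Set (PF E I)} (hm : IsJoinOf m S) (hTS : T ⊆ S)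
    (hT : ∀ g ∈ S, ∀ ω ∈ A, ω ∈ dom g → g ∈ T) :
    IsJoinOf (restrictTo A m) (restrictTo A '' T) := fun ω x => by
  by_cases hA : ω ∈ A
  · simp only [restrictTo_apply_of_mem hA, Set.exists_mem_image, hm ω x]
    exact ⟨fun ⟨g, hg, hgx⟩ => ⟨g, hT g hg ω hA (mem_dom_of_eq_some hgx), hgx⟩,
      fun ⟨g, hg, hgx⟩ => ⟨g, hTS hg, hgx⟩⟩
  · simp [restrictTo_apply_of_notMem hA]

end Restriction

section Constraints

variable {Ψ : Set (PF E I)} {ω : E} {h h' : PF E I}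

theorem Constr.mem_dom_left (hC : Constr Ψ ω h h') : ω ∈ dom h := hC.2.2.1.1

theorem Constr.mem_dom_right (hC : Constr Ψ ω h h') : ω ∈ dom h' := hC.2.2.2.1.1

/-- Padded to the domain of its argument, a `G` that is stable along `le` becomes a consistent
Boolean extended function. -/
theorem Constr.apply_eq (hC : Constr Ψ ω h h') (G : PF E I → PF E (fun _ => Bool))
    (hG : ∀ m ∈ Ext Ψ, ∀ m' ∈ Ext Ψ, le m' m → ∀ ω' ∈ dom m', G m' ω' = G m ω')
    (hh : ω ∈ dom (G h)) (hh' : ω ∈ dom (G h')) : G h ω = G h' ω := by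
  let F : PF E I → PF E (fun _ => Bool) := fun m ω' => (m ω').map fun _ => (G m ω').getD false
  have hF : IsExtFun Ψ F := fun m _ => by ext ω'; simp [F, dom]
  have hFc : Consistent Ψ F := fun m hm m' hm' hle ω' hω' => by
    have hd : ω' ∈ dom m' := by simpa [F, dom] using hω'
    simp only [F, hle ω' hd, hG m hm m' hm' hle ω' hd]
  have key := hC.2.2.2.2 F hF hFc
  obtain ⟨a, ha⟩ := mem_dom_iff.mp hC.mem_dom_left
  obtain ⟨a', ha'⟩ := mem_dom_iff.mp hC.mem_dom_right
  obtain ⟨x, hx⟩ := mem_dom_iff.mp hh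
  obtain ⟨y, hy⟩ := mem_dom_iff.mp hh'
  simp only [F, ha, ha', hx, hy, Option.map_some, Option.getD_some, Option.some.injEq] at key
  rw [hx, hy, key]

theorem Constr.apply_restrictTo_eq {Ψ' : Set (PF E I)} {A : Set E}
    (hA : ∀ m ∈ Ext Ψ, ∀ ω ∈ A, ω ∈ dom m → restrictTo A m ∈ Ext Ψ')
    (hC : Constr Ψ ω h h') (hω : ω ∈ A) {F : PF E I → PF E (fun _ => Bool)}
    (hF : IsExtFun Ψ' F) (hFc : Consistent Ψ' F) :
    F (restrictTo A h) ω = F (restrictTo A h') ω := by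
  have hdom : ∀ m ∈ Ext Ψ, ∀ ω ∈ A, ω ∈ dom m →
      ω ∈ dom (restrictTo A (F (restrictTo A m))) := fun m hm ω hω hd => by
    rw [mem_dom_restrictTo, hF _ (hA m hm ω hω hd), mem_dom_restrictTo]
    exact ⟨hω, hω, hd⟩
  have key := hC.apply_eq (fun m => restrictTo A (F (restrictTo A m))) ?_
    (hdom h (mem_ext_of_mem hC.1) ω hω hC.mem_dom_left)
    (hdom h' (mem_ext_of_mem hC.2.1) ω hω hC.mem_dom_right)
  · simpa only [restrictTo_apply_of_mem hω] using key
  intro m hm m' hm' hle ω' hω'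
  by_cases hA' : ω' ∈ A
  · simp only [restrictTo_apply_of_mem hA']
    have hm'A := hA m' hm' ω' hA' hω'
    refine hFc _ (hA m hm ω' hA' (hle.dom_subset hω')) _ hm'A (restrictTo_le_restrictTo hle) ω' ?_
    change ω' ∈ dom _
    rw [hF _ hm'A, mem_dom_restrictTo]
    exact ⟨hA', hω'⟩
  · simp only [restrictTo_apply_of_notMem hA']

end Constraints

section SeqComp

variable {Θ Θ' : Set (PF E I)} {k h m' : PF E I}

theorem ext_subset_ext_seqComp : Ext Θ ⊆ Ext (seqComp Θ Θ') := ext_mono Set.subset_union_left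

theorem join_mem_ext_seqComp (hk : k ∈ maxExt Θ) (hm' : m' ∈ Ext Θ') :
    join k m' ∈ Ext (seqComp Θ Θ') := by
  obtain ⟨S, hSΘ', hSne, hSc, hj⟩ := hm'
  refine ⟨join k '' S, ?_, hSne.image _, (hSc.mono' fun _ _ hab => hab.join_left).image,
    hj.join_left hSne⟩
  rintro _ ⟨h', hh', rfl⟩
  exact Or.inr ⟨k, hk, h', hSΘ' hh', rfl⟩

theorem tips_seqComp_of_mem (hh : h ∈ Θ) : tips (seqComp Θ Θ') h = tips Θ h := by
  ext ω
  refine ⟨fun ⟨hd, hmin⟩ => ⟨hd, fun g hg => hmin g (Or.inl hg)⟩, fun ⟨hd, hmin⟩ => ⟨hd, ?_⟩⟩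
  rintro g (hg | ⟨k, hk, h', -, rfl⟩) hle hne
  · exact hmin g hg hle hne
  · have hhk : h = k := hk.2 h (mem_ext_of_mem hh) (le_join_left.trans hle)
    exact absurd (hle.antisymm (hhk ▸ le_join_left)) hne

end SeqComp

structure SplitEvents (E₁ E₂ : Set E) (Θ Θ' : Set (PF E I)) : Prop where
  disjoint : Disjoint E₁ E₂
  dom_left : ∀ h ∈ Θ, dom h ⊆ E₁
  dom_right : ∀ h ∈ Θ', dom h ⊆ E₂

namespace SplitEvents

variable {E₁ E₂ : Set E} {Θ Θ' : Set (PF E I)} {k k₂ h h' h₂ g m : PF E I} {ω : E}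

theorem dom_ext_left (hs : SplitEvents E₁ E₂ Θ Θ') (hk : k ∈ Ext Θ) : dom k ⊆ E₁ :=
  dom_subset_of_mem_ext hs.dom_left hk

theorem join_apply_right (hs : SplitEvents E₁ E₂ Θ Θ') (hk : k ∈ Ext Θ) (hω : ω ∈ E₂) :
    join k h ω = h ω :=
  join_apply_of_eq_none (eq_none_of_dom_subset (hs.dom_ext_left hk)
    (hs.disjoint.notMem_of_mem_right hω))

theorem restrictTo_left_join (hs : SplitEvents E₁ E₂ Θ Θ') (hk : k ∈ Ext Θ) (hh' : h' ∈ Θ') :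
    restrictTo E₁ (join k h') = k :=
  restrictTo_join_left hs.disjoint (hs.dom_ext_left hk) (hs.dom_right h' hh')

theorem restrictTo_right_join (hs : SplitEvents E₁ E₂ Θ Θ') (hk : k ∈ Ext Θ) (hh' : h' ∈ Θ') :
    restrictTo E₂ (join k h') = h' :=
  restrictTo_join_right hs.disjoint (hs.dom_ext_left hk) (hs.dom_right h' hh')

theorem le_and_le_of_join_le_join (hs : SplitEvents E₁ E₂ Θ Θ') (hk₂ : k₂ ∈ Ext Θ)
    (hh₂ : h₂ ∈ Θ') (hk : k ∈ Ext Θ) (hh' : h' ∈ Θ') (hle : le (join k₂ h₂) (join k h')) :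
    le k₂ k ∧ le h₂ h' := by
  have h₁ := restrictTo_le_restrictTo (A := E₁) hle
  have h₂ := restrictTo_le_restrictTo (A := E₂) hle
  rw [hs.restrictTo_left_join hk₂ hh₂, hs.restrictTo_left_join hk hh'] at h₁
  rw [hs.restrictTo_right_join hk₂ hh₂, hs.restrictTo_right_join hk hh'] at h₂
  exact ⟨h₁, h₂⟩

theorem join_notMem_of_mem_dom (hs : SplitEvents E₁ E₂ Θ Θ') (hh' : h' ∈ Θ')
    (hd : ω ∈ dom h') : join k h' ∉ Θ := fun hj =>
  hs.disjoint.notMem_of_mem_right (hs.dom_right h' hh' hd)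
    (hs.dom_left _ hj (mem_dom_join_right hd))

theorem restrictTo_left_mem_ext_of_mem (hs : SplitEvents E₁ E₂ Θ Θ')
    (hg : g ∈ seqComp Θ Θ') : restrictTo E₁ g ∈ Ext Θ := by
  rcases hg with hg | ⟨k, hk, h', hh', rfl⟩
  · rw [restrictTo_eq_self (hs.dom_left g hg)]
    exact mem_ext_of_mem hg
  · rw [hs.restrictTo_left_join hk.1 hh']
    exact hk.1

theorem restrictTo_right_mem_of_mem (hs : SplitEvents E₁ E₂ Θ Θ') (hg : g ∈ seqComp Θ Θ')
    (hgΘ : g ∉ Θ) : restrictTo E₂ g ∈ Θ' := by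
  obtain ⟨k, hk, h', hh', rfl⟩ := hg.resolve_left hgΘ
  rwa [hs.restrictTo_right_join hk.1 hh']

/-- If a compatible family in `Θ ⤳ Θ'` contains a join `k ∨ h'` outside `Θ`, the `E₁`-parts of
all its members are compatible with the maximal `k`, hence below it. -/
theorem ext_seqComp_cases (hs : SplitEvents E₁ E₂ Θ Θ') (hm : m ∈ Ext (seqComp Θ Θ')) :
    m ∈ Ext Θ ∨ restrictTo E₁ m ∈ maxExt Θ ∧ restrictTo E₂ m ∈ Ext Θ' := by
  obtain ⟨S, hSΦ, hSne, hSc, hj⟩ := hm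
  by_cases hSΘ : S ⊆ Θ
  · exact Or.inl ⟨S, hSΘ, hSne, hSc, hj⟩
  obtain ⟨g₀, hg₀S, hg₀Θ⟩ := Set.not_subset.mp hSΘ
  obtain ⟨k₀, hk₀, h₀, -, rfl⟩ := (hSΦ hg₀S).resolve_left hg₀Θ
  have hm₁ : restrictTo E₁ m = k₀ := by
    refine le.antisymm ?_ ?_
    · refine (hj.restrictTo subset_rfl fun g hg _ _ _ => hg).le_of_forall_le ?_
      rintro _ ⟨g, hg, rfl⟩
      exact le_of_mem_maxExt hk₀ (hs.restrictTo_left_mem_ext_of_mem (hSΦ hg))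
        ((Set.pairwise_iff_of_refl.mp hSc hg hg₀S).of_le restrictTo_le_self le_join_left)
    · have hk₀m := restrictTo_le_restrictTo (A := E₁) (le_join_left.trans (hj.le_of_mem hg₀S))
      rwa [restrictTo_eq_self (hs.dom_ext_left hk₀.1)] at hk₀m
  refine Or.inr ⟨hm₁ ▸ hk₀, restrictTo E₂ '' {g ∈ S | g ∉ Θ}, ?_,
    ⟨_, ⟨_, ⟨hg₀S, hg₀Θ⟩, rfl⟩⟩,
    ((hSc.mono (Set.sep_subset S _)).mono' fun _ _ hab =>
      hab.of_le restrictTo_le_self restrictTo_le_self).image,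
    hj.restrictTo (Set.sep_subset S _) fun g hg ω hω hd =>
      ⟨hg, fun hgΘ => hs.disjoint.notMem_of_mem_right hω (hs.dom_left g hgΘ hd)⟩⟩
  rintro _ ⟨g, ⟨hg, hgΘ⟩, rfl⟩
  exact hs.restrictTo_right_mem_of_mem (hSΦ hg) hgΘ

theorem restrictTo_left_mem_ext (hs : SplitEvents E₁ E₂ Θ Θ') (hm : m ∈ Ext (seqComp Θ Θ')) :
    restrictTo E₁ m ∈ Ext Θ :=
  (hs.ext_seqComp_cases hm).elim (fun hmΘ => (restrictTo_eq_self (hs.dom_ext_left hmΘ)).symm ▸ hmΘ)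
    fun h => h.1.1

theorem mem_maxExt_of_mem_dom (hs : SplitEvents E₁ E₂ Θ Θ') (hm : m ∈ Ext (seqComp Θ Θ'))
    (hω : ω ∈ E₂) (hd : ω ∈ dom m) :
    restrictTo E₁ m ∈ maxExt Θ ∧ restrictTo E₂ m ∈ Ext Θ' :=
  (hs.ext_seqComp_cases hm).resolve_left fun hmΘ =>
    hs.disjoint.notMem_of_mem_right hω (hs.dom_ext_left hmΘ hd)

end SplitEvents

namespace SplitEvents

variable {E₁ E₂ : Set E} {Θ Θ' : Set (PF E I)} {k k₂ h h' h₂ g g₂ : PF E I} {ω : E}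

theorem tips_seqComp_join (hs : SplitEvents E₁ E₂ Θ Θ') (hk : k ∈ maxExt Θ) (hh' : h' ∈ Θ')
    (hn : join k h' ∉ Θ) : tips (seqComp Θ Θ') (join k h') = tips Θ' h' := by
  ext ω
  constructor
  · rintro ⟨hd, hmin⟩
    have hω : ω ∈ dom h' := by
      cases hkω : k ω with
      | some a =>
        obtain ⟨h, hh, hle, hωh⟩ := exists_le_of_mem_dom_of_mem_ext hk.1 (mem_dom_of_eq_some hkω)
        exact absurd hωh (hmin h (Or.inl hh) (hle.trans le_join_left) (fun he => hn (he ▸ hh)))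
      | none => simpa [dom, join_apply_of_eq_none hkω] using hd
    refine ⟨hω, fun h₂ hh₂ hle hne hω₂ => hmin _ (Or.inr ⟨k, hk, h₂, hh₂, rfl⟩)
      (join_le_join_right hle) (fun he => hne ?_) (mem_dom_join_right hω₂)⟩
    rw [← hs.restrictTo_right_join hk.1 hh₂, he, hs.restrictTo_right_join hk.1 hh']
  · rintro ⟨hd, hmin⟩
    have hωE₂ := hs.dom_right h' hh' hd
    refine ⟨mem_dom_join_right hd, ?_⟩
    rintro g (hg | ⟨k₂, hk₂, h₂, hh₂, rfl⟩) hle hne hωg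
    · exact hs.disjoint.notMem_of_mem_right hωE₂ (hs.dom_left g hg hωg)
    · obtain ⟨hkk, hhh⟩ := hs.le_and_le_of_join_le_join hk₂.1 hh₂ hk.1 hh' hle
      obtain rfl : k = k₂ := hk₂.2 k hk.1 hkk
      refine hmin h₂ hh₂ hhh (fun he => hne (he ▸ rfl)) ?_
      simpa [dom, hs.join_apply_right hk.1 hωE₂] using hωg

theorem mem_left_iff_of_mem_tips (hs : SplitEvents E₁ E₂ Θ Θ') (hg : g ∈ seqComp Θ Θ')
    (hω : ω ∈ tips (seqComp Θ Θ') g) : g ∈ Θ ↔ ω ∈ E₁ := by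
  refine ⟨fun hgΘ => hs.dom_left g hgΘ hω.1, fun hωE₁ => by_contra fun hgΘ => ?_⟩
  obtain ⟨k, hk, h', hh', rfl⟩ := hg.resolve_left hgΘ
  rw [hs.tips_seqComp_join hk hh' hgΘ] at hω
  exact hs.disjoint.notMem_of_mem_left hωE₁ (hs.dom_right h' hh' hω.1)

theorem constr_seqComp_iff_of_mem (hs : SplitEvents E₁ E₂ Θ Θ') (hh : h ∈ Θ) (hh₂ : h₂ ∈ Θ) :
    Constr (seqComp Θ Θ') ω h h₂ ↔ Constr Θ ω h h₂ := by
  constructor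
  · intro hC
    have ht := hC.2.2.1
    have ht₂ := hC.2.2.2.1
    rw [tips_seqComp_of_mem hh] at ht
    rw [tips_seqComp_of_mem hh₂] at ht₂
    refine ⟨hh, hh₂, ht, ht₂, fun F hFe hFc => ?_⟩
    have key := hC.apply_restrictTo_eq (fun m hm _ _ _ => hs.restrictTo_left_mem_ext hm)
      (hs.dom_left h hh ht.1) hFe hFc
    rwa [restrictTo_eq_self (hs.dom_left h hh), restrictTo_eq_self (hs.dom_left h₂ hh₂)] at key
  · rintro ⟨-, -, ht, ht₂, hF⟩
    refine ⟨Or.inl hh, Or.inl hh₂, by rwa [tips_seqComp_of_mem hh],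
      by rwa [tips_seqComp_of_mem hh₂], fun F hFe hFc => hF F (fun k hk => hFe k (ext_subset_ext_seqComp hk)) fun k hk k' hk' =>
        hFc k (ext_subset_ext_seqComp hk) k' (ext_subset_ext_seqComp hk')⟩

theorem constr_seqComp_join (hs : SplitEvents E₁ E₂ Θ Θ') (hk : k ∈ maxExt Θ)
    (hC : Constr Θ' ω h' h₂) : Constr (seqComp Θ Θ') ω (join k h') (join k h₂) := by
  have ⟨hh', hh₂, ht, ht₂, _⟩ := hC
  refine ⟨Or.inr ⟨k, hk, h', hh', rfl⟩, Or.inr ⟨k, hk, h₂, hh₂, rfl⟩,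
    by rwa [hs.tips_seqComp_join hk hh' (hs.join_notMem_of_mem_dom hh' ht.1)],
    by rwa [hs.tips_seqComp_join hk hh₂ (hs.join_notMem_of_mem_dom hh₂ ht₂.1)],
    fun F hFe hFc => hC.apply_eq (fun m' => F (join k m')) ?_ ?_ ?_⟩
  · intro m hm m' hm' hle ω' hω'
    have hkm' := join_mem_ext_seqComp hk hm'
    refine hFc _ (join_mem_ext_seqComp hk hm) _ hkm' (join_le_join_right hle) ω' ?_
    change ω' ∈ dom _
    rw [hFe _ hkm']
    exact mem_dom_join_right hω'
  · rw [hFe _ (join_mem_ext_seqComp hk (mem_ext_of_mem hh'))]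
    exact mem_dom_join_right ht.1
  · rw [hFe _ (join_mem_ext_seqComp hk (mem_ext_of_mem hh₂))]
    exact mem_dom_join_right ht₂.1

theorem constr_of_constr_seqComp_join (hs : SplitEvents E₁ E₂ Θ Θ') (hk : k ∈ maxExt Θ)
    (hh' : h' ∈ Θ') (hh₂ : h₂ ∈ Θ') (hn : join k h' ∉ Θ) (hn₂ : join k h₂ ∉ Θ)
    (hC : Constr (seqComp Θ Θ') ω (join k h') (join k h₂)) : Constr Θ' ω h' h₂ := by
  have ht := hC.2.2.1
  have ht₂ := hC.2.2.2.1
  rw [hs.tips_seqComp_join hk hh' hn] at ht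
  rw [hs.tips_seqComp_join hk hh₂ hn₂] at ht₂
  refine ⟨hh', hh₂, ht, ht₂, fun F hFe hFc => ?_⟩
  have key := hC.apply_restrictTo_eq (fun m hm _ hω hd => (hs.mem_maxExt_of_mem_dom hm hω hd).2)
    (hs.dom_right h' hh' ht.1) hFe hFc
  rwa [hs.restrictTo_right_join hk.1 hh', hs.restrictTo_right_join hk.1 hh₂] at key

theorem eq_of_constr_seqComp_join (hs : SplitEvents E₁ E₂ Θ Θ') (hk : k ∈ maxExt Θ)
    (hk₂ : k₂ ∈ maxExt Θ) (hh' : h' ∈ Θ') (hh₂ : h₂ ∈ Θ') (hn : join k h' ∉ Θ)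
    (hC : Constr (seqComp Θ Θ') ω (join k h') (join k₂ h₂)) : k = k₂ := by
  classical
  have hωE₂ : ω ∈ E₂ := by
    have ht := hC.2.2.1
    rw [hs.tips_seqComp_join hk hh' hn] at ht
    exact hs.dom_right h' hh' ht.1
  let G : PF E I → PF E (fun _ => Bool) := fun m ω' =>
    (m ω').map fun _ => decide (ω' ∈ E₂ ∧ restrictTo E₁ m = k)
  have key := hC.apply_eq G ?_ (by simpa [G, dom] using hC.mem_dom_left)
    (by simpa [G, dom] using hC.mem_dom_right)
  · obtain ⟨a, ha⟩ := mem_dom_iff.mp hC.mem_dom_left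
    obtain ⟨b, hb⟩ := mem_dom_iff.mp hC.mem_dom_right
    simp only [G, ha, hb, hωE₂, hs.restrictTo_left_join hk.1 hh',
      hs.restrictTo_left_join hk₂.1 hh₂, Option.map_some, Option.some.injEq, true_and,
      decide_true, true_eq_decide_iff] at key
    exact key.symm
  intro m hm m' hm' hle ω' hω'
  by_cases hω'E₂ : ω' ∈ E₂
  · have hmax := (hs.mem_maxExt_of_mem_dom hm' hω'E₂ hω').1
    have h₁ := hmax.2 _ (hs.restrictTo_left_mem_ext hm) (restrictTo_le_restrictTo hle)
    simp only [G, hle ω' hω', h₁]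
  · simp only [G, hle ω' hω', hω'E₂, false_and]

end SplitEvents

open Classical in
/-- A join `k ∨ h'` lies in `Θ` only when `h'` has empty domain, and then the family must be
empty there. -/
noncomputable def seqSplit (Θ Θ' : Set (PF E I)) (G : PF E I → PF E O) :
    (PF E I → PF E O) × (PF E I → PF E I → PF E O) :=
  (restrictCF Θ G, fun k h' =>
    if k ∈ maxExt Θ ∧ h' ∈ Θ' ∧ join k h' ∉ Θ then G (join k h') else fun _ => none)

theorem seqGlue_of_mem {Θ Θ' : Set (PF E I)} {E₁ E₂ : Set E}
    {p : (PF E I → PF E O) × (PF E I → PF E I → PF E O)} {g : PF E I} (hg : g ∈ Θ) :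
    seqGlue Θ Θ' E₁ E₂ p g = p.1 g := if_pos hg

theorem seqGlue_of_notMem {Θ Θ' : Set (PF E I)} {E₁ E₂ : Set E}
    {p : (PF E I → PF E O) × (PF E I → PF E I → PF E O)} {g : PF E I}
    (hg : g ∉ seqComp Θ Θ') : seqGlue Θ Θ' E₁ E₂ p g = fun _ => none := by
  rw [seqGlue, if_neg fun h => hg (Or.inl h), if_neg hg]

namespace SplitEvents

variable {E₁ E₂ : Set E} {Θ Θ' : Set (PF E I)} {k h' : PF E I}

theorem seqGlue_join (hs : SplitEvents E₁ E₂ Θ Θ')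
    {p : (PF E I → PF E O) × (PF E I → PF E I → PF E O)} (hk : k ∈ maxExt Θ) (hh' : h' ∈ Θ')
    (hn : join k h' ∉ Θ) : seqGlue Θ Θ' E₁ E₂ p (join k h') = p.2 k h' := by
  rw [seqGlue, if_neg hn, if_pos (show join k h' ∈ seqComp Θ Θ' from Or.inr ⟨k, hk, h', hh', rfl⟩),
    hs.restrictTo_left_join hk.1 hh', hs.restrictTo_right_join hk.1 hh']

theorem tips_eq_empty_of_join_mem (hs : SplitEvents E₁ E₂ Θ Θ') (hh' : h' ∈ Θ')
    (hn : join k h' ∈ Θ) : tips Θ' h' = ∅ :=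
  Set.eq_empty_of_forall_notMem fun _ ht => hs.join_notMem_of_mem_dom hh' ht.1 hn

theorem mapsTo_seqGlue (hs : SplitEvents E₁ E₂ Θ Θ') :
    Set.MapsTo (seqGlue Θ Θ' E₁ E₂) (CausFunSet Θ O ×ˢ seqFamSet Θ Θ' O)
      (CausFunSet (seqComp Θ Θ') O) := by
  rintro ⟨f, F⟩ ⟨⟨⟨hfdom, hfc⟩, -⟩, hFmem, -⟩
  refine ⟨⟨fun g hg => ?_, fun ω g g₂ hC => ?_⟩, fun g hg ω => by rw [seqGlue_of_notMem hg]⟩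
  · by_cases hgΘ : g ∈ Θ
    · rw [seqGlue_of_mem hgΘ, hfdom g hgΘ, tips_seqComp_of_mem hgΘ]
    · obtain ⟨k, hk, h', hh', rfl⟩ := hg.resolve_left hgΘ
      rw [hs.seqGlue_join hk hh' hgΘ, (hFmem k hk).1.1 h' hh', hs.tips_seqComp_join hk hh' hgΘ]
  have hiff : g ∈ Θ ↔ g₂ ∈ Θ := (hs.mem_left_iff_of_mem_tips hC.1 hC.2.2.1).trans
    (hs.mem_left_iff_of_mem_tips hC.2.1 hC.2.2.2.1).symm
  by_cases hgΘ : g ∈ Θ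
  · have hg₂Θ := hiff.mp hgΘ
    rw [seqGlue_of_mem hgΘ, seqGlue_of_mem hg₂Θ]
    exact hfc ω g g₂ ((hs.constr_seqComp_iff_of_mem hgΘ hg₂Θ).mp hC)
  · have hg₂Θ := mt hiff.mpr hgΘ
    obtain ⟨k, hk, h', hh', rfl⟩ := hC.1.resolve_left hgΘ
    obtain ⟨k₂, hk₂, h₂, hh₂, rfl⟩ := hC.2.1.resolve_left hg₂Θ
    obtain rfl := hs.eq_of_constr_seqComp_join hk hk₂ hh' hh₂ hgΘ hC
    rw [hs.seqGlue_join hk hh' hgΘ, hs.seqGlue_join hk hh₂ hg₂Θ]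
    exact (hFmem k hk).1.2 ω h' h₂ (hs.constr_of_constr_seqComp_join hk hh' hh₂ hgΘ hg₂Θ hC)

theorem restrictCF_mem_causFunSet (hs : SplitEvents E₁ E₂ Θ Θ') {G : PF E I → PF E O}
    (hG : G ∈ CausFunSet (seqComp Θ Θ') O) : restrictCF Θ G ∈ CausFunSet Θ O := by
  obtain ⟨⟨hGdom, hGc⟩, -⟩ := hG
  refine ⟨⟨fun h hh => ?_, fun ω h h₂ hC => ?_⟩, fun h hh ω => by simp [restrictCF, hh]⟩
  · rw [restrictCF, if_pos hh, hGdom h (Or.inl hh), tips_seqComp_of_mem hh]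
  · rw [restrictCF, restrictCF, if_pos hC.1, if_pos hC.2.1]
    exact hGc ω h h₂ ((hs.constr_seqComp_iff_of_mem hC.1 hC.2.1).mpr hC)

theorem seqSplit_snd_mem_seqFamSet (hs : SplitEvents E₁ E₂ Θ Θ') {G : PF E I → PF E O}
    (hG : G ∈ CausFunSet (seqComp Θ Θ') O) : (seqSplit Θ Θ' G).2 ∈ seqFamSet Θ Θ' O := by
  obtain ⟨⟨hGdom, hGc⟩, -⟩ := hG
  refine ⟨fun k hk => ⟨⟨fun h' hh' => ?_, fun ω h' h₂ hC => ?_⟩, fun h' hh' ω => ?_⟩,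
    fun k hk => by funext h'; simp [seqSplit, hk]⟩
  · by_cases hn : join k h' ∈ Θ
    · simp only [seqSplit, hn, not_true_eq_false, and_false, if_false,
        hs.tips_eq_empty_of_join_mem hh' hn]
      exact Set.eq_empty_of_forall_notMem fun _ => by simp [dom]
    · simp only [seqSplit, hk, hh', hn, not_false_eq_true, and_self, if_true]
      rw [hGdom _ (Or.inr ⟨k, hk, h', hh', rfl⟩), hs.tips_seqComp_join hk hh' hn]
  · have hn := hs.join_notMem_of_mem_dom (k := k) hC.1 hC.mem_dom_left
    have hn₂ := hs.join_notMem_of_mem_dom (k := k) hC.2.1 hC.mem_dom_right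
    simp only [seqSplit, hk, hC.1, hC.2.1, hn, hn₂, not_false_eq_true, and_self, if_true]
    exact hGc ω _ _ (hs.constr_seqComp_join hk hC)
  · simp [seqSplit, hh']

theorem seqSplit_seqGlue (hs : SplitEvents E₁ E₂ Θ Θ')
    {p : (PF E I → PF E O) × (PF E I → PF E I → PF E O)}
    (hp : p ∈ CausFunSet Θ O ×ˢ seqFamSet Θ Θ' O) :
    seqSplit Θ Θ' (seqGlue Θ Θ' E₁ E₂ p) = p := by
  obtain ⟨f, F⟩ := p
  obtain ⟨⟨-, hfn⟩, hFmem, hFn⟩ := hp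
  refine Prod.ext (funext fun h => ?_) (funext fun k => funext fun h' => ?_)
  · by_cases hh : h ∈ Θ
    · simp [seqSplit, restrictCF, hh, seqGlue_of_mem hh]
    · simp only [seqSplit, restrictCF, hh, if_false]
      exact funext fun ω => (hfn h hh ω).symm
  by_cases hcond : k ∈ maxExt Θ ∧ h' ∈ Θ' ∧ join k h' ∉ Θ
  · obtain ⟨hk, hh', hn⟩ := hcond
    simp only [seqSplit, hk, hh', hn, not_false_eq_true, and_self, if_true]
    exact hs.seqGlue_join hk hh' hn
  simp only [seqSplit, if_neg hcond]
  by_cases hk : k ∈ maxExt Θ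
  · by_cases hh' : h' ∈ Θ'
    · have hn : join k h' ∈ Θ := by tauto
      refine (eq_none_of_dom_eq_empty ?_).symm
      rw [(hFmem k hk).1.1 h' hh', hs.tips_eq_empty_of_join_mem hh' hn]
    · exact funext fun ω => ((hFmem k hk).2 h' hh' ω).symm
  · exact (congrFun (hFn k hk) h').symm

theorem seqGlue_seqSplit (hs : SplitEvents E₁ E₂ Θ Θ') {G : PF E I → PF E O}
    (hG : G ∈ CausFunSet (seqComp Θ Θ') O) : seqGlue Θ Θ' E₁ E₂ (seqSplit Θ Θ' G) = G := by
  funext g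
  by_cases hgΘ : g ∈ Θ
  · simp [seqGlue_of_mem hgΘ, seqSplit, restrictCF, hgΘ]
  by_cases hg : g ∈ seqComp Θ Θ'
  · obtain ⟨k, hk, h', hh', rfl⟩ := hg.resolve_left hgΘ
    simp [hs.seqGlue_join hk hh' hgΘ, seqSplit, hk, hh', hgΘ]
  · rw [seqGlue_of_notMem hg]
    exact funext fun ω => (hG.2 g hg ω).symm

end SplitEvents

theorem stmt10_general {E : Type} {I O : E → Type}
    (E₁ E₂ : Set E) (hdisj : Disjoint E₁ E₂)
    (Θ Θ' : Set (PF E I))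
    (hd1 : ∀ h ∈ Θ, dom h ⊆ E₁) (hd2 : ∀ h ∈ Θ', dom h ⊆ E₂) :
    Set.BijOn (seqGlue Θ Θ' E₁ E₂)
      ((CausFunSet Θ O) ×ˢ (seqFamSet Θ Θ' O))
      (CausFunSet (seqComp Θ Θ') O) := by
  have hs : SplitEvents E₁ E₂ Θ Θ' := ⟨hdisj, hd1, hd2⟩
  refine Set.InvOn.bijOn ⟨fun _ hp => hs.seqSplit_seqGlue hp, fun _ hG => hs.seqGlue_seqSplit hG⟩
    hs.mapsTo_seqGlue fun _ hG =>
      ⟨hs.restrictCF_mem_causFunSet hG, hs.seqSplit_snd_mem_seqFamSet hG⟩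

/-- for spaces `Θ`, `Θ'` over disjoint sets of events, pairing a
causal function for `Θ` with a family of causal functions for `Θ'` indexed by the
maximal extended input histories of `Θ` gives a bijection onto the causal functions of
the sequential composition `Θ ⤳ Θ'`. -/
theorem stmt10 {E : Type} [Fintype E] {I O : E → Type}
    [∀ ω, Nonempty (I ω)] [∀ ω, Nonempty (O ω)]
    (E₁ E₂ : Set E) (hdisj : Disjoint E₁ E₂)
    (Θ Θ' : Set (PF E I)) (hS : IsSpace Θ) (hS' : IsSpace Θ')
    (hd1 : ∀ h ∈ Θ, dom h ⊆ E₁) (hd2 : ∀ h ∈ Θ', dom h ⊆ E₂) :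
    Set.BijOn (seqGlue Θ Θ' E₁ E₂)
      ((CausFunSet Θ O) ×ˢ (seqFamSet Θ Θ' O))
      (CausFunSet (seqComp Θ Θ') O) :=
  stmt10_general E₁ E₂ hdisj Θ Θ' hd1 hd2

end Caus
end
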